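/- Let M_λ = (1/n)G_λ + (1/λ²)I where G_λ is the positive definite matrix with entries g_λ(p_i−p_j). Then the condition number of M_λ satisfies κ(M_λ) ≤ 1 + ∑_{l ∈ ℤ^m} λ²/(1 + λ‖l‖_{2k}^{2k}), a bound independent of n and of the point locations p_i. -/

import Mathlib

/-!
Expanding `g_λ` in its Fourier series writes `G_λ = ∑ₗ ŵ(l) (cₗcₗᵀ + sₗsₗᵀ)` with
`cₗ = (cos 2π l·pᵢ)ᵢ`, `sₗ = (sin 2π l·pᵢ)ᵢ` and weights `ŵ(l) = (1 + λ‖l‖₂ₖ²ᵏ)⁻¹ > 0`.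
Hence `0 ≤ xᵀG_λx ≤ n ‖x‖² ∑ₗ ŵ(l)` by Cauchy–Schwarz, so every eigenvalue of `M_λ` lies in
`[λ⁻², λ⁻² + ∑ₗ ŵ(l)]`, an interval whose endpoints have ratio `1 + λ² ∑ₗ ŵ(l)`.
The weights are summable for `2k > m` because, by AM–GM, they are dominated by the product
`∏ⱼ (1 + lⱼ²ᵏ)^(-1/m)` of one-dimensional `p`-series with exponent `2k/m > 1`.
-/

/-- The kernel `g_λ(x) = ∑_{l ∈ ℤ^m} cos(2π l·x) / (1 + λ‖l‖_{2k}^{2k})`,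
where `‖l‖_{2k}^{2k} = ∑_{j=1}^m l_j^{2k}`. -/
noncomputable def gfun (m k : ℕ) (lam : ℝ) (x : Fin m → ℝ) : ℝ :=
  ∑' l : Fin m → ℤ,
    Real.cos (2 * Real.pi * ∑ j, (l j : ℝ) * x j) / (1 + lam * ∑ j, ((l j : ℝ)) ^ (2 * k))

open Finset Real Matrix

theorem summable_pi_prod {α : Type*} {h : α → ℝ} (h0 : 0 ≤ h) (hs : Summable h) :
    ∀ m : ℕ, Summable fun l : Fin m → α => ∏ j, h (l j)
  | 0 => .of_finite
  | m + 1 => by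
    rw [← (Fin.consEquiv fun _ => α).summable_iff]
    convert hs.mul_of_nonneg (summable_pi_prod h0 hs m) h0
      (fun l => prod_nonneg fun j _ => h0 (l j)) using 2 with x
    simp [Fin.prod_univ_succ]

theorem summable_one_add_abs_pow_rpow_neg {n : ℕ} {r : ℝ} (h : 1 < n * r) :
    Summable fun z : ℤ => (1 + |(z : ℝ)| ^ n) ^ (-r) := by
  refine (Real.summable_abs_int_rpow h).of_norm_bounded_eventually ?_
  filter_upwards [(Set.finite_singleton (0 : ℤ)).compl_mem_cofinite] with z hz
  have hz : 0 < |(z : ℝ)| := by simpa using hz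
  have hr : 0 < r := pos_of_mul_pos_right (one_pos.trans h) n.cast_nonneg
  rw [norm_of_nonneg (by positivity), neg_mul_eq_mul_neg, rpow_natCast_mul hz.le]
  exact rpow_le_rpow_of_nonpos (by positivity) (le_add_of_nonneg_left zero_le_one)
    (neg_nonpos.2 hr.le)

theorem inv_one_add_sum_le_prod_rpow {ι : Type*} [Fintype ι] [Nonempty ι] {a : ι → ℝ}
    (ha : ∀ i, 0 ≤ a i) :
    (1 + ∑ i, a i)⁻¹ ≤ ∏ i, (1 + a i) ^ (-(Fintype.card ι : ℝ)⁻¹) := by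
  set c : ℝ := (Fintype.card ι : ℝ)
  have hc : 1 ≤ c := Nat.one_le_cast.2 Fintype.card_pos
  have hpos : ∀ i, 0 < 1 + a i := fun i => by linarith [ha i]
  have amgm : ∏ i, (1 + a i) ^ c⁻¹ ≤ ∑ i, c⁻¹ * (1 + a i) :=
    geom_mean_le_arith_mean_weighted univ _ _ (fun _ _ => by positivity)
      (by simp [c]) fun i _ => (hpos i).le
  have mean_le : ∑ i, c⁻¹ * (1 + a i) ≤ 1 + ∑ i, a i := by
    rw [← mul_sum, sum_add_distrib, sum_const, card_univ, nsmul_one, mul_add,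
      inv_mul_cancel₀ (by positivity : c ≠ 0)]
    gcongr
    exact mul_le_of_le_one_left (sum_nonneg fun i _ => ha i) (inv_le_one_of_one_le₀ hc)
  simp_rw [rpow_neg (hpos _).le, prod_inv_distrib]
  exact inv_anti₀ (prod_pos fun i _ => rpow_pos_of_pos (hpos i) _) (amgm.trans mean_le)

namespace Matrix.IsHermitian

variable {ι : Type*} [Fintype ι] [DecidableEq ι] {A : Matrix ι ι ℝ}

theorem exists_dotProduct_mulVec_eq_eigenvalues_mul (hA : A.IsHermitian) (i : ι) :
    ∃ v : ι → ℝ, 0 < v ⬝ᵥ v ∧ v ⬝ᵥ A *ᵥ v = hA.eigenvalues i * (v ⬝ᵥ v) := by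
  refine ⟨hA.eigenvectorBasis i, ?_, by rw [mulVec_eigenvectorBasis, dotProduct_smul, smul_eq_mul]⟩
  have hv : ⇑(hA.eigenvectorBasis i) ≠ 0 := by
    simpa using hA.eigenvectorBasis.orthonormal.ne_zero i
  exact lt_of_le_of_ne (sum_nonneg fun a _ => mul_self_nonneg _)
    (Ne.symm (dotProduct_self_eq_zero.not.2 hv))

theorem le_eigenvalues_of_le_dotProduct_mulVec (hA : A.IsHermitian) {c : ℝ}
    (h : ∀ x, c * (x ⬝ᵥ x) ≤ x ⬝ᵥ A *ᵥ x) (i : ι) : c ≤ hA.eigenvalues i := by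
  obtain ⟨v, hv, hAv⟩ := hA.exists_dotProduct_mulVec_eq_eigenvalues_mul i
  exact le_of_mul_le_mul_right (hAv ▸ h v) hv

theorem eigenvalues_le_of_dotProduct_mulVec_le (hA : A.IsHermitian) {c : ℝ}
    (h : ∀ x, x ⬝ᵥ A *ᵥ x ≤ c * (x ⬝ᵥ x)) (i : ι) : hA.eigenvalues i ≤ c := by
  obtain ⟨v, hv, hAv⟩ := hA.exists_dotProduct_mulVec_eq_eigenvalues_mul i
  exact le_of_mul_le_mul_right (hAv ▸ h v) hv

end Matrix.IsHermitian

section CosKernel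

variable {ι L : Type*}

noncomputable def cosKernelMatrix (w : L → ℝ) (θ : L → ι → ℝ) : Matrix ι ι ℝ :=
  of fun a b => ∑' l, w l * cos (θ l a - θ l b)

theorem cosKernelMatrix_isHermitian (w : L → ℝ) (θ : L → ι → ℝ) :
    (cosKernelMatrix w θ).IsHermitian :=
  IsHermitian.ext fun a b => by simp [cosKernelMatrix, ← cos_neg (θ _ a - _)]

variable [Fintype ι]

theorem sum_sum_mul_mul_cos_sub (x θ : ι → ℝ) :
    ∑ a, ∑ b, x a * x b * cos (θ a - θ b) =
      (∑ a, x a * cos (θ a)) ^ 2 + (∑ a, x a * sin (θ a)) ^ 2 := by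
  simp only [sq, sum_mul_sum, ← sum_add_distrib, cos_sub]
  refine sum_congr rfl fun a _ => sum_congr rfl fun b _ => by ring

theorem sq_sum_mul_cos_add_sq_sum_mul_sin_le (x θ : ι → ℝ) :
    (∑ a, x a * cos (θ a)) ^ 2 + (∑ a, x a * sin (θ a)) ^ 2 ≤ Fintype.card ι * (x ⬝ᵥ x) := by
  calc _ ≤ (∑ a, x a ^ 2) * ∑ a, cos (θ a) ^ 2 + (∑ a, x a ^ 2) * ∑ a, sin (θ a) ^ 2 :=
        add_le_add (sum_mul_sq_le_sq_mul_sq _ _ _) (sum_mul_sq_le_sq_mul_sq _ _ _)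
    _ = Fintype.card ι * (x ⬝ᵥ x) := by
        simp_rw [← mul_add, ← sum_add_distrib, cos_sq_add_sin_sq]
        simp [dotProduct, sq, mul_comm]

theorem dotProduct_mulVec_cosKernelMatrix {w : L → ℝ} (hw : Summable w) (θ : L → ι → ℝ)
    (x : ι → ℝ) :
    x ⬝ᵥ cosKernelMatrix w θ *ᵥ x =
      ∑' l, w l * ((∑ a, x a * cos (θ l a)) ^ 2 + (∑ a, x a * sin (θ l a)) ^ 2) := by
  have hsum (a b : ι) : Summable fun l => x a * x b * (w l * cos (θ l a - θ l b)) := by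
    refine Summable.mul_left _ (hw.norm.of_norm_bounded fun l => ?_)
    rw [norm_mul, Real.norm_eq_abs (cos _)]
    exact mul_le_of_le_one_right (norm_nonneg _) (abs_cos_le_one _)
  calc x ⬝ᵥ cosKernelMatrix w θ *ᵥ x
      = ∑ a, ∑ b, ∑' l, x a * x b * (w l * cos (θ l a - θ l b)) := by
        simp only [dotProduct, mulVec, cosKernelMatrix, of_apply, mul_sum, tsum_mul_left]
        refine sum_congr rfl fun a _ => sum_congr rfl fun b _ => ?_
        ring
    _ = ∑' l, ∑ a, ∑ b, x a * x b * (w l * cos (θ l a - θ l b)) := by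
        rw [Summable.tsum_finsetSum fun a _ => summable_sum fun b _ => hsum a b]
        exact sum_congr rfl fun a _ => (Summable.tsum_finsetSum fun b _ => hsum a b).symm
    _ = _ := tsum_congr fun l => by
        rw [← sum_sum_mul_mul_cos_sub, mul_sum]
        exact sum_congr rfl fun a _ => by rw [mul_sum]; exact sum_congr rfl fun b _ => by ring

theorem dotProduct_mulVec_cosKernelMatrix_nonneg {w : L → ℝ} (hw0 : 0 ≤ w) (hw : Summable w)
    (θ : L → ι → ℝ) (x : ι → ℝ) : 0 ≤ x ⬝ᵥ cosKernelMatrix w θ *ᵥ x := by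
  rw [dotProduct_mulVec_cosKernelMatrix hw]
  exact tsum_nonneg fun l => mul_nonneg (hw0 l) (by positivity)

theorem dotProduct_mulVec_cosKernelMatrix_le {w : L → ℝ} (hw0 : 0 ≤ w) (hw : Summable w)
    (θ : L → ι → ℝ) (x : ι → ℝ) :
    x ⬝ᵥ cosKernelMatrix w θ *ᵥ x ≤ (∑' l, w l) * (Fintype.card ι * (x ⬝ᵥ x)) := by
  rw [dotProduct_mulVec_cosKernelMatrix hw, ← tsum_mul_right]
  have hterm (l : L) : w l * ((∑ a, x a * cos (θ l a)) ^ 2 + (∑ a, x a * sin (θ l a)) ^ 2) ≤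
      w l * (Fintype.card ι * (x ⬝ᵥ x)) :=
    mul_le_mul_of_nonneg_left (sq_sum_mul_cos_add_sq_sum_mul_sin_le x (θ l)) (hw0 l)
  exact Summable.tsum_le_tsum hterm ((hw.mul_right _).of_nonneg_of_le
    (fun l => mul_nonneg (hw0 l) (by positivity)) hterm) (hw.mul_right _)

theorem eigenvalues_mem_Icc_of_smul_cosKernelMatrix_add_smul_one [DecidableEq ι] {w : L → ℝ}
    (hw0 : 0 ≤ w) (hw : Summable w) (θ : L → ι → ℝ) {c d : ℝ} (hc : 0 ≤ c)
    (hM : (c • cosKernelMatrix w θ + d • 1).IsHermitian) (i : ι) :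
    hM.eigenvalues i ∈ Set.Icc d (c * Fintype.card ι * ∑' l, w l + d) := by
  have hquad (x : ι → ℝ) : x ⬝ᵥ (c • cosKernelMatrix w θ + d • 1) *ᵥ x =
      c * (x ⬝ᵥ cosKernelMatrix w θ *ᵥ x) + d * (x ⬝ᵥ x) := by
    simp [add_mulVec, smul_mulVec, dotProduct_add]
  refine ⟨hM.le_eigenvalues_of_le_dotProduct_mulVec (fun x => ?_) i,
    hM.eigenvalues_le_of_dotProduct_mulVec_le (fun x => ?_) i⟩
  · rw [hquad, le_add_iff_nonneg_left]
    exact mul_nonneg hc (dotProduct_mulVec_cosKernelMatrix_nonneg hw0 hw θ x)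
  · rw [hquad, add_mul]
    refine add_le_add_left ?_ _
    calc c * (x ⬝ᵥ cosKernelMatrix w θ *ᵥ x)
        ≤ c * ((∑' l, w l) * (Fintype.card ι * (x ⬝ᵥ x))) :=
          mul_le_mul_of_nonneg_left (dotProduct_mulVec_cosKernelMatrix_le hw0 hw θ x) hc
      _ = c * Fintype.card ι * (∑' l, w l) * (x ⬝ᵥ x) := by ring

end CosKernel

noncomputable def gfunCoeff {m : ℕ} (k : ℕ) (lam : ℝ) (l : Fin m → ℤ) : ℝ :=
  (1 + lam * ∑ j, (l j : ℝ) ^ (2 * k))⁻¹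

theorem gfunCoeff_pos {m k : ℕ} {lam : ℝ} (hlam : 0 ≤ lam) (l : Fin m → ℤ) :
    0 < gfunCoeff k lam l := by
  have : 0 ≤ ∑ j, (l j : ℝ) ^ (2 * k) := sum_nonneg fun j _ => (even_two_mul k).pow_nonneg _
  unfold gfunCoeff
  positivity

theorem summable_gfunCoeff {m k : ℕ} (hmk : m < 2 * k) {lam : ℝ} (hlam : 0 < lam) :
    Summable (gfunCoeff (m := m) k lam) := by
  obtain rfl | hm := m.eq_zero_or_pos
  · exact .of_finite
  have : Nonempty (Fin m) := ⟨⟨0, hm⟩⟩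
  set h : ℤ → ℝ := fun z => (1 + |(z : ℝ)| ^ (2 * k)) ^ (-(m : ℝ)⁻¹)
  have hh : Summable h := summable_one_add_abs_pow_rpow_neg <| by
    rw [← div_eq_mul_inv, one_lt_div (by positivity)]; exact_mod_cast hmk
  refine ((summable_pi_prod (fun z => by positivity) hh m).mul_left (1 + lam⁻¹)).of_nonneg_of_le
    (fun l => (gfunCoeff_pos hlam.le l).le) fun l => ?_
  set A := ∑ j, (l j : ℝ) ^ (2 * k)
  have hA : 0 ≤ A := sum_nonneg fun j _ => (even_two_mul k).pow_nonneg _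
  have hprod : (1 + A)⁻¹ ≤ ∏ j, h (l j) := by
    simpa only [h, A, (even_two_mul k).pow_abs, Fintype.card_fin] using
      inv_one_add_sum_le_prod_rpow (a := fun j => |(l j : ℝ)| ^ (2 * k)) fun j => by positivity
  calc gfunCoeff k lam l ≤ (1 + lam⁻¹) * (1 + A)⁻¹ := by
        change (1 + lam * A)⁻¹ ≤ _
        field_simp
        nlinarith [mul_nonneg (sq_nonneg lam) hA]
    _ ≤ (1 + lam⁻¹) * ∏ j, h (l j) := by gcongr

theorem of_gfun_sub_eq_cosKernelMatrix {ι : Type*} {m : ℕ} (k : ℕ) (lam : ℝ)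
    (p : ι → Fin m → ℝ) :
    of (fun i j => gfun m k lam (p i - p j)) =
      cosKernelMatrix (gfunCoeff k lam) (fun l i => 2 * π * ∑ t, (l t : ℝ) * p i t) := by
  ext i j
  refine tsum_congr fun l => ?_
  simp only [gfunCoeff, Pi.sub_apply, mul_sub, sum_sub_distrib]
  ring

theorem stmt_9_general (m k n : ℕ)
    (hkm : (m : ℝ) / 2 < (k : ℝ)) (lam : ℝ) (hlam : 0 < lam)
    (p : Fin n → Fin m → ℝ) :
    ∃ hM : ((n : ℝ)⁻¹ • Matrix.of (fun i j : Fin n => gfun m k lam (p i - p j))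
        + (lam ^ 2)⁻¹ • (1 : Matrix (Fin n) (Fin n) ℝ)).IsHermitian,
      ∀ i j : Fin n, hM.eigenvalues i ≤
        (1 + ∑' l : Fin m → ℤ, lam ^ 2 / (1 + lam * ∑ t, ((l t : ℝ)) ^ (2 * k)))
          * hM.eigenvalues j := by
  have hmk : m < 2 * k := by exact_mod_cast (by linarith : (m : ℝ) < 2 * k)
  have hw := summable_gfunCoeff hmk hlam
  have hw0 : 0 ≤ gfunCoeff (m := m) k lam := fun l => (gfunCoeff_pos hlam.le l).le
  set S := ∑' l, gfunCoeff k lam l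
  have hS : ∑' l : Fin m → ℤ, lam ^ 2 / (1 + lam * ∑ t, ((l t : ℝ)) ^ (2 * k)) = lam ^ 2 * S :=
    tsum_mul_left
  rw [of_gfun_sub_eq_cosKernelMatrix, hS]
  set θ : (Fin m → ℤ) → Fin n → ℝ := fun l i => 2 * π * ∑ t, (l t : ℝ) * p i t
  have hM := ((cosKernelMatrix_isHermitian (gfunCoeff k lam) θ).smul (.all (n : ℝ)⁻¹)).add
    (isHermitian_one.smul (.all (lam ^ 2)⁻¹))
  refine ⟨hM, fun i j => ?_⟩
  have hn : (n : ℝ) ≠ 0 := Nat.cast_ne_zero.2 i.pos.ne'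
  obtain ⟨-, upper⟩ := eigenvalues_mem_Icc_of_smul_cosKernelMatrix_add_smul_one hw0 hw θ
    (inv_nonneg.2 n.cast_nonneg) hM i
  obtain ⟨lower, -⟩ := eigenvalues_mem_Icc_of_smul_cosKernelMatrix_add_smul_one hw0 hw θ
    (inv_nonneg.2 n.cast_nonneg) hM j
  rw [Fintype.card_fin, inv_mul_cancel₀ hn, one_mul] at upper
  calc _ ≤ S + (lam ^ 2)⁻¹ := upper
    _ = (1 + lam ^ 2 * S) * (lam ^ 2)⁻¹ := by field_simp; ring
    _ ≤ _ := mul_le_mul_of_nonneg_left lower <|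
      add_nonneg zero_le_one (mul_nonneg (sq_nonneg lam) (tsum_nonneg hw0))

/-- Condition number bound for the interpolation matrix
`M_λ = (1/n) G_λ + (1/λ²) I`, where `(G_λ)_{ij} = g_λ(p_i − p_j)`:
the ratio of any two eigenvalues of `M_λ` is bounded by
`1 + ∑_{l ∈ ℤ^m} λ² / (1 + λ‖l‖_{2k}^{2k})`, independently of `n` and of the
(torus-distinct) point locations `p_i`. -/
theorem stmt_9 (m k n : ℕ) (hm : 0 < m) (hn : 0 < n) (hk : 0 < k)
    (hkm : (m : ℝ) / 2 < (k : ℝ)) (lam : ℝ) (hlam : 0 < lam)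
    (p : Fin n → Fin m → ℝ)
    (hp : ∀ i j : Fin n, (∀ t, ∃ z : ℤ, p i t - p j t = (z : ℝ)) → i = j) :
    ∃ hM : ((n : ℝ)⁻¹ • Matrix.of (fun i j : Fin n => gfun m k lam (p i - p j))
        + (lam ^ 2)⁻¹ • (1 : Matrix (Fin n) (Fin n) ℝ)).IsHermitian,
      ∀ i j : Fin n, hM.eigenvalues i ≤
        (1 + ∑' l : Fin m → ℤ, lam ^ 2 / (1 + lam * ∑ t, ((l t : ℝ)) ^ (2 * k)))
          * hM.eigenvalues j :=
  stmt_9_general m k n hkm lam hlam p
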